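/- arXiv:1403.0780 — 4 statements merged into one kernel-verified Lean document; each statement's English description precedes it below -/
import Mathlib

section
/- Let K be a positive integer and let α be a real skew-symmetric K×K matrix. Then there exists a constant C > 0 (depending on α) such that for every twice continuously differentiable 2π-periodic map u: ℝ → ℝ^K one has ∫₀^{2π} ‖u'(θ) + α·u(θ)‖² dθ ≤ C ∫₀^{2π} ‖u''(θ) + 2α·u'(θ) + α²·u(θ)‖² dθ. -/
open Real MeasureTheory
open scoped Matrix RealInnerProductSpace

/-- The action of a `K × K` real matrix on `ℝ^K` (with the Euclidean norm). -/
noncomputable def matAct {K : ℕ} (α : Matrix (Fin K) (Fin K) ℝ)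
    (x : EuclideanSpace ℝ (Fin K)) : EuclideanSpace ℝ (Fin K) :=
  Matrix.toEuclideanLin α x

/-!
Conjugating by the parallel transport `R θ = exp (θ • A)`, which is orthogonal since `A` is
skew-adjoint, turns the twisted derivative into an ordinary one: for `v = u' + A u` the gauged map
`w θ = R θ (v θ)` satisfies `w' = R (v' + A v)`, the monodromy relation `w T = Q (w 0)` with
`Q = R T`, and `∫₀ᵀ w = Q (u 0) - u 0`, because `w` is the derivative of `θ ↦ R θ (u θ)`.
Hence `‖w θ - w 0‖ ≤ ∫₀ᵀ ‖v' + A v‖`; the part of `w 0` orthogonal to the fixed space of `Q` is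
controlled by `‖Q (w 0) - w 0‖`, and its part in the fixed space by the distance of `w 0` to the
mean of `w`, which lies in the range of `Q - 1`. So `‖v‖` is bounded pointwise by the `L¹` norm
of the second twisted derivative, and Cauchy–Schwarz concludes.
-/

theorem sq_intervalIntegral_le_mul_intervalIntegral_sq {h : ℝ → ℝ} (hh : Continuous h)
    {T : ℝ} (hT : 0 < T) :
    (∫ x in (0:ℝ)..T, h x) ^ 2 ≤ T * ∫ x in (0:ℝ)..T, h x ^ 2 := by
  set m := (∫ x in (0:ℝ)..T, h x) / T
  have hvar : 0 ≤ ∫ x in (0:ℝ)..T, (h x - m) ^ 2 :=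
    intervalIntegral.integral_nonneg hT.le fun _ _ => sq_nonneg _
  have hint : ∀ {f : ℝ → ℝ}, Continuous f → IntervalIntegrable f volume 0 T :=
    fun hf => hf.intervalIntegrable _ _
  have hexpand : ∫ x in (0:ℝ)..T, (h x - m) ^ 2
      = (∫ x in (0:ℝ)..T, h x ^ 2) - 2 * m * (∫ x in (0:ℝ)..T, h x) + T * m ^ 2 := by
    simp only [sub_sq]
    rw [intervalIntegral.integral_add (hint (by fun_prop)) (hint (by fun_prop)),
      intervalIntegral.integral_sub (hint (by fun_prop)) (hint (by fun_prop)),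
      intervalIntegral.integral_mul_const, intervalIntegral.integral_const_mul,
      intervalIntegral.integral_const, smul_eq_mul]
    ring
  have hmT : m * T = ∫ x in (0:ℝ)..T, h x := div_mul_cancel₀ _ hT.ne'
  nlinarith

theorem intervalIntegral_norm_sq_le_of_norm_le_mul_intervalIntegral {E : Type*}
    [NormedAddCommGroup E] {f : ℝ → E} {h : ℝ → ℝ}
    (hf : Continuous f) (hh : Continuous h) {M T : ℝ} (hT : 0 < T)
    (hfh : ∀ θ ∈ Set.Icc 0 T, ‖f θ‖ ≤ M * ∫ t in (0:ℝ)..T, h t) :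
    ∫ θ in (0:ℝ)..T, ‖f θ‖ ^ 2 ≤ T ^ 2 * M ^ 2 * ∫ t in (0:ℝ)..T, h t ^ 2 := by
  calc ∫ θ in (0:ℝ)..T, ‖f θ‖ ^ 2 ≤ ∫ θ in (0:ℝ)..T, (M * ∫ t in (0:ℝ)..T, h t) ^ 2 :=
        intervalIntegral.integral_mono_on hT.le ((hf.norm.pow 2).intervalIntegrable _ _)
          intervalIntegrable_const fun θ hθ => pow_le_pow_left₀ (norm_nonneg _) (hfh θ hθ) 2
    _ = T * M ^ 2 * (∫ t in (0:ℝ)..T, h t) ^ 2 := by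
        rw [intervalIntegral.integral_const, smul_eq_mul]; ring
    _ ≤ T * M ^ 2 * (T * ∫ t in (0:ℝ)..T, h t ^ 2) := by
        gcongr
        exact sq_intervalIntegral_le_mul_intervalIntegral_sq hh hT
    _ = T ^ 2 * M ^ 2 * ∫ t in (0:ℝ)..T, h t ^ 2 := by ring

section NormedSpace

variable {E : Type*} [NormedAddCommGroup E] [NormedSpace ℝ E]

theorem Function.Periodic.deriv {f : ℝ → E} {T : ℝ} (hf : Function.Periodic f T) :
    Function.Periodic (deriv f) T := fun θ => by
  rw [← deriv_comp_add_const, funext hf]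

theorem norm_sub_le_intervalIntegral_norm_deriv [CompleteSpace E] {w w' : ℝ → E}
    (hw : ∀ t, HasDerivAt w (w' t) t) (hw' : Continuous w') {T θ : ℝ} (hθ : θ ∈ Set.Icc 0 T) :
    ‖w θ - w 0‖ ≤ ∫ t in (0:ℝ)..T, ‖w' t‖ := by
  rw [← intervalIntegral.integral_eq_sub_of_hasDerivAt (fun t _ => hw t)
    (hw'.intervalIntegrable _ _)]
  calc ‖∫ t in (0:ℝ)..θ, w' t‖ ≤ ∫ t in (0:ℝ)..θ, ‖w' t‖ :=
        intervalIntegral.norm_integral_le_integral_norm hθ.1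
    _ ≤ ∫ t in (0:ℝ)..T, ‖w' t‖ :=
        intervalIntegral.integral_mono_interval le_rfl hθ.1 hθ.2
          (.of_forall fun _ => norm_nonneg _) (hw'.norm.intervalIntegrable _ _)

theorem norm_le_mul_intervalIntegral_norm_deriv [CompleteSpace E] {Q : E →L[ℝ] E} {c : ℝ}
    (hc0 : 0 ≤ c) (hc : ∀ x y : E, ‖x‖ ≤ c * (‖Q x - x‖ + ‖x - (Q y - y)‖))
    {T : ℝ} (hT : 0 < T) {w w' : ℝ → E} (hw : ∀ t, HasDerivAt w (w' t) t)
    (hw' : Continuous w') (hwT : w T = Q (w 0)) {y : E} (hmean : ∫ t in (0:ℝ)..T, w t = Q y - y)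
    {θ : ℝ} (hθ : θ ∈ Set.Icc 0 T) :
    ‖w θ‖ ≤ (2 * c + 1) * ∫ t in (0:ℝ)..T, ‖w' t‖ := by
  set I := ∫ t in (0:ℝ)..T, ‖w' t‖
  have hdev : ∀ t ∈ Set.Icc 0 T, ‖w t - w 0‖ ≤ I := fun t ht =>
    norm_sub_le_intervalIntegral_norm_deriv hw hw' ht
  have hwc : Continuous w := continuous_iff_continuousAt.2 fun t => (hw t).continuousAt
  have hmonodromy : ‖Q (w 0) - w 0‖ ≤ I := hwT ▸ hdev T ⟨hT.le, le_rfl⟩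
  have hmean' : ‖w 0 - (Q (T⁻¹ • y) - T⁻¹ • y)‖ ≤ I := by
    have hrw : w 0 - (Q (T⁻¹ • y) - T⁻¹ • y) = T⁻¹ • ∫ t in (0:ℝ)..T, (w 0 - w t) := by
      rw [map_smul, ← smul_sub, ← hmean, intervalIntegral.integral_sub intervalIntegrable_const
        (hwc.intervalIntegrable _ _), intervalIntegral.integral_const, sub_zero, smul_sub,
        inv_smul_smul₀ hT.ne']
    rw [hrw, norm_smul, norm_inv, Real.norm_of_nonneg hT.le, inv_mul_le_iff₀ hT]
    calc ‖∫ t in (0:ℝ)..T, (w 0 - w t)‖ ≤ I * |T - 0| :=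
          intervalIntegral.norm_integral_le_of_norm_le_const fun t ht => by
            rw [norm_sub_rev]
            exact hdev t (Set.Ioc_subset_Icc_self (Set.uIoc_of_le hT.le ▸ ht))
      _ = T * I := by rw [sub_zero, abs_of_pos hT, mul_comm]
  calc ‖w θ‖ ≤ ‖w 0‖ + ‖w θ - w 0‖ := norm_le_norm_add_norm_sub' _ _
    _ ≤ c * (I + I) + I := by
        gcongr
        · exact (hc _ _).trans (by gcongr)
        · exact hdev θ hθ
    _ = (2 * c + 1) * I := by ring

theorem hasDerivAt_exp_smul_apply [CompleteSpace E] (A : E →L[ℝ] E) {f : ℝ → E} {f' : E}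
    {θ : ℝ} (hf : HasDerivAt f f' θ) :
    HasDerivAt (fun t => NormedSpace.exp (t • A) (f t))
      (NormedSpace.exp (θ • A) (f' + A (f θ))) θ := by
  convert (hasDerivAt_exp_smul_const A θ).clm_apply hf using 1
  rw [map_add, add_comm]
  rfl

end NormedSpace

section InnerProductSpace

variable {E : Type*} [NormedAddCommGroup E] [InnerProductSpace ℝ E]

theorem inner_sub_self_eq_zero_of_mem_unitary [CompleteSpace E] {Q : E →L[ℝ] E}
    (hQ : Q ∈ unitary (E →L[ℝ] E)) {c : E} (hc : Q c = c) (x : E) : ⟪c, Q x - x⟫ = 0 := by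
  rw [inner_sub_right, ← hc, Q.inner_map_map_of_mem_unitary hQ, hc, sub_self]

theorem exists_norm_le_of_mem_unitary [FiniteDimensional ℝ E] {Q : E →L[ℝ] E}
    (hQ : Q ∈ unitary (E →L[ℝ] E)) :
    ∃ c > 0, ∀ x y : E, ‖x‖ ≤ c * (‖Q x - x‖ + ‖x - (Q y - y)‖) := by
  set K := LinearMap.ker ((Q - 1 : E →L[ℝ] E) : E →ₗ[ℝ] E)
  have hK : ∀ x, x ∈ K ↔ Q x = x := fun x => by simp [K, sub_eq_zero]
  have hP : ∀ y, K.starProjection (Q y - y) = 0 := fun y =>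
    K.starProjection_apply_eq_zero_iff.2 fun c hc =>
      inner_sub_self_eq_zero_of_mem_unitary hQ ((hK c).1 hc) y
  have hinj : Function.Injective (((Q - 1 : E →L[ℝ] E) : E →ₗ[ℝ] E).prod
      (K.starProjection : E →ₗ[ℝ] E)) := by
    rw [← LinearMap.ker_eq_bot, LinearMap.ker_prod, eq_bot_iff]
    rintro x ⟨hxK, hxP⟩
    rw [← K.starProjection_eq_self_iff.2 hxK]
    exact hxP
  obtain ⟨c, hc, hanti⟩ := LinearMap.injective_iff_antilipschitz _ |>.mp hinj
  refine ⟨c, hc, fun x y => ?_⟩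
  have hPx : ‖K.starProjection x‖ ≤ ‖x - (Q y - y)‖ := by
    simpa [hP] using K.norm_starProjection_apply_le (x - (Q y - y))
  have hΦ := hanti.le_mul_dist x 0
  rw [map_zero, dist_zero_right, dist_zero_right] at hΦ
  calc ‖x‖ ≤ c * ‖(Q x - x, K.starProjection x)‖ := hΦ
    _ ≤ c * (‖Q x - x‖ + ‖x - (Q y - y)‖) := by
        rw [Prod.norm_def]
        gcongr
        exact (max_le_add_of_nonneg (norm_nonneg _) (norm_nonneg _)).trans (by gcongr)

theorem exp_smul_mem_unitary_of_mem_skewAdjoint [CompleteSpace E] {A : E →L[ℝ] E}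
    (hA : A ∈ skewAdjoint (E →L[ℝ] E)) (θ : ℝ) :
    NormedSpace.exp (θ • A) ∈ unitary (E →L[ℝ] E) :=
  letI : NormedAlgebra ℚ (E →L[ℝ] E) := .restrictScalars ℚ ℝ _
  NormedSpace.exp_mem_unitary_of_mem_skewAdjoint (skewAdjoint.smul_mem θ hA)

theorem norm_le_mul_intervalIntegral_norm_twisted_deriv [CompleteSpace E] {A : E →L[ℝ] E}
    (hA : A ∈ skewAdjoint (E →L[ℝ] E)) {T c : ℝ} (hT : 0 < T) (hc0 : 0 ≤ c)
    (hc : ∀ x y : E, ‖x‖ ≤ c * (‖NormedSpace.exp (T • A) x - x‖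
      + ‖x - (NormedSpace.exp (T • A) y - y)‖))
    {u : ℝ → E} (hu : ContDiff ℝ 2 u) (hper : Function.Periodic u T)
    {θ : ℝ} (hθ : θ ∈ Set.Icc 0 T) :
    ‖deriv u θ + A (u θ)‖ ≤ (2 * c + 1) *
      ∫ t in (0:ℝ)..T, ‖deriv (deriv u) t + (2 : ℝ) • A (deriv u t) + A (A (u t))‖ := by
  set R : ℝ → E →L[ℝ] E := fun θ => NormedSpace.exp (θ • A)
  have hu' : ContDiff ℝ 1 (deriv u) := hu.deriv'
  have hu1 : ∀ θ, HasDerivAt u (deriv u θ) θ := fun θ =>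
    (hu.differentiable two_ne_zero θ).hasDerivAt
  have hu2 : ∀ θ, HasDerivAt (deriv u) (deriv (deriv u) θ) θ := fun θ =>
    (hu'.differentiable one_ne_zero θ).hasDerivAt
  have hu2c := hu'.continuous_deriv le_rfl
  set v : ℝ → E := fun θ => deriv u θ + A (u θ)
  set g : ℝ → E := fun θ => deriv (deriv u) θ + (2 : ℝ) • A (deriv u θ) + A (A (u θ))
  have hv : ∀ θ, HasDerivAt v (deriv (deriv u) θ + A (deriv u θ)) θ := fun θ =>
    (hu2 θ).add (A.hasFDerivAt.comp_hasDerivAt θ (hu1 θ))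
  have hw : ∀ θ, HasDerivAt (fun t => R t (v t)) (R θ (g θ)) θ := fun θ => by
    convert hasDerivAt_exp_smul_apply A (hv θ) using 2
    simp only [g, v, map_add, two_smul]
    abel
  have hwc : Continuous fun t => R t (v t) :=
    continuous_iff_continuousAt.2 fun θ => (hw θ).continuousAt
  have hRc : Continuous R :=
    continuous_iff_continuousAt.2 fun θ => (hasDerivAt_exp_smul_const A θ).continuousAt
  have hvper : Function.Periodic v T := fun θ => by simp only [v, hper θ, hper.deriv θ]
  have hmonodromy : R T (v T) = R T (R 0 (v 0)) := by simp [R, hvper.eq]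
  have hmean : ∫ θ in (0:ℝ)..T, R θ (v θ) = R T (u 0) - u 0 := by
    rw [intervalIntegral.integral_eq_sub_of_hasDerivAt
      (fun θ _ => hasDerivAt_exp_smul_apply A (hu1 θ)) (hwc.intervalIntegrable _ _)]
    simp [R, hper.eq]
  simpa only [(R _).norm_map_of_mem_unitary (exp_smul_mem_unitary_of_mem_skewAdjoint hA _)] using
    norm_le_mul_intervalIntegral_norm_deriv hc0 hc hT hw (by fun_prop) hmonodromy hmean hθ

theorem exists_intervalIntegral_norm_sq_le_of_mem_skewAdjoint [FiniteDimensional ℝ E]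
    {A : E →L[ℝ] E} (hA : A ∈ skewAdjoint (E →L[ℝ] E)) {T : ℝ} (hT : 0 < T) :
    ∃ C > 0, ∀ u : ℝ → E, ContDiff ℝ 2 u → Function.Periodic u T →
      ∫ θ in (0:ℝ)..T, ‖deriv u θ + A (u θ)‖ ^ 2 ≤
        C * ∫ θ in (0:ℝ)..T, ‖deriv (deriv u) θ + (2 : ℝ) • A (deriv u θ) + A (A (u θ))‖ ^ 2 := by
  obtain ⟨c, hc0, hc⟩ :=
    exists_norm_le_of_mem_unitary (exp_smul_mem_unitary_of_mem_skewAdjoint hA T)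
  refine ⟨T ^ 2 * (2 * c + 1) ^ 2, by positivity, fun u hu hper => ?_⟩
  have hu1c := hu.continuous_deriv one_le_two
  have hu2c := hu.deriv'.continuous_deriv le_rfl
  exact intervalIntegral_norm_sq_le_of_norm_le_mul_intervalIntegral (by fun_prop) (by fun_prop) hT
    fun θ hθ => norm_le_mul_intervalIntegral_norm_twisted_deriv hA hT hc0.le hc hu hper hθ

end InnerProductSpace

theorem Matrix.toEuclideanCLM_mem_skewAdjoint {n : Type*} [Fintype n] [DecidableEq n]
    {α : Matrix n n ℝ} (hα : αᵀ = -α) :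
    Matrix.toEuclideanCLM (𝕜 := ℝ) α ∈
      skewAdjoint (EuclideanSpace ℝ n →L[ℝ] EuclideanSpace ℝ n) := by
  rw [skewAdjoint.mem_iff, ← map_star, Matrix.star_eq_conjTranspose,
    Matrix.conjTranspose_eq_transpose_of_trivial, hα, map_neg]

theorem poincare_flat_connection_general (K : ℕ)
    (α : Matrix (Fin K) (Fin K) ℝ) (hα : αᵀ = -α) :
    ∃ C > 0, ∀ u : ℝ → EuclideanSpace ℝ (Fin K),
      ContDiff ℝ 2 u → Function.Periodic u (2 * Real.pi) →
      (∫ θ in (0:ℝ)..(2 * Real.pi), ‖deriv u θ + matAct α (u θ)‖ ^ 2) ≤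
        C * ∫ θ in (0:ℝ)..(2 * Real.pi),
          ‖deriv (deriv u) θ + (2 : ℝ) • matAct α (deriv u θ)
            + matAct α (matAct α (u θ))‖ ^ 2 :=
  -- `matAct α` is definitionally the operator `Matrix.toEuclideanCLM α`.
  exists_intervalIntegral_norm_sq_le_of_mem_skewAdjoint
    (Matrix.toEuclideanCLM_mem_skewAdjoint hα) Real.two_pi_pos

/-- Poincaré-type inequality for a flat connection on `S¹` (Lemma 4.3). -/
theorem poincare_flat_connection (K : ℕ) (hK : 0 < K)
    (α : Matrix (Fin K) (Fin K) ℝ) (hα : αᵀ = -α) :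
    ∃ C > 0, ∀ u : ℝ → EuclideanSpace ℝ (Fin K),
      ContDiff ℝ 2 u → Function.Periodic u (2 * Real.pi) →
      (∫ θ in (0:ℝ)..(2 * Real.pi), ‖deriv u θ + matAct α (u θ)‖ ^ 2) ≤
        C * ∫ θ in (0:ℝ)..(2 * Real.pi),
          ‖deriv (deriv u) θ + (2 : ℝ) • matAct α (deriv u θ)
            + matAct α (matAct α (u θ))‖ ^ 2 :=
  poincare_flat_connection_general K α hα
end

section
/- Let σ > 0 and T > 0. Suppose Θ: [−T, T] → ℝ is twice continuously differentiable with Θ ≥ 0, F: [−T, T] → ℝ is continuous with F ≥ 0, and Θ''(t) ≥ σ²Θ(t) − F(t) for all t ∈ [−T, T]. Then for all t ∈ [−T, T]: Θ(t) ≤ (Θ(T) + Θ(−T))·e^{σ(|t|−T)}/(1 − e^{−4σT}) + (1/(2σ)) ∫_{−T}^{T} e^{−σ|t−s|} F(s) ds. -/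
/-!
`Θ` is compared with the explicit solution `Φ` of `Φ'' = σ²Φ - F` given by variation of constants,
with homogeneous part `Θ(-T) e^{-σ(t+T)} + Θ(T) e^{σ(t-T)}`, so that `Φ ≥ Θ` at `±T`. Then
`(Φ - Θ)'' ≤ σ² (Φ - Θ)`, and a negative interior minimum of `Φ - Θ` would have negative second
derivative; hence `Θ ≤ Φ` on `[-T, T]`. There `Φ` is its homogeneous part, which is at most
`(Θ(T) + Θ(-T)) e^{σ(|t|-T)}`, plus `(2σ)⁻¹ ∫ e^{-σ|t-s|} F(s) ds`.
-/

open Real MeasureTheory Set Filter Topology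

/-- If the second derivative were negative, `x₀` would also be a local maximum, so `f` would be
locally constant. -/
theorem IsLocalMin.deriv_deriv_nonneg {f : ℝ → ℝ} {x₀ : ℝ} (h : IsLocalMin f x₀)
    (hc : ContinuousAt f x₀) : 0 ≤ deriv (deriv f) x₀ := by
  by_contra! hneg
  have hmax := isLocalMax_of_deriv_deriv_neg hneg h.deriv_eq_zero hc
  have hconst : f =ᶠ[𝓝 x₀] fun _ ↦ f x₀ :=
    (h.and hmax).mono fun _ hx ↦ le_antisymm hx.2 hx.1
  have hzero : deriv (deriv f) x₀ = 0 := by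
    rw [hconst.deriv.deriv_eq, deriv_const', deriv_const]
  exact hneg.ne hzero

theorem nonneg_of_boundary_nonneg {W : ℝ → ℝ} {a b : ℝ} (hW : ContinuousOn W (Icc a b))
    (hneg : ∀ t ∈ Ioo a b, W t < 0 → deriv (deriv W) t < 0) (ha : 0 ≤ W a) (hb : 0 ≤ W b)
    {t : ℝ} (ht : t ∈ Icc a b) : 0 ≤ W t := by
  obtain ⟨t₀, ht₀, hmin⟩ := isCompact_Icc.exists_isMinOn ⟨t, ht⟩ hW
  by_contra! hWt
  have hW₀ : W t₀ < 0 := (hmin ht).trans_lt hWt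
  have hIoo : t₀ ∈ Ioo a b :=
    ⟨ht₀.1.lt_of_ne (by rintro rfl; linarith), ht₀.2.lt_of_ne (by rintro rfl; linarith)⟩
  have hnhds : Icc a b ∈ 𝓝 t₀ := Icc_mem_nhds hIoo.1 hIoo.2
  exact (hneg t₀ hIoo hW₀).not_ge
    ((hmin.isLocalMin hnhds).deriv_deriv_nonneg (hW.continuousAt hnhds))

theorem le_of_boundary_le {k a b : ℝ} (hk : 0 < k) {u v : ℝ → ℝ}
    (hu : Differentiable ℝ u) (hu' : Differentiable ℝ (deriv u))
    (hv : Differentiable ℝ v) (hv' : Differentiable ℝ (deriv v))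
    (hineq : ∀ t ∈ Ioo a b, deriv (deriv v) t - k * v t ≤ deriv (deriv u) t - k * u t)
    (ha : u a ≤ v a) (hb : u b ≤ v b) {t : ℝ} (ht : t ∈ Icc a b) : u t ≤ v t := by
  have hderiv : deriv (v - u) = deriv v - deriv u := funext fun t ↦ deriv_sub (hv t) (hu t)
  have hderiv2 (t : ℝ) : deriv (deriv (v - u)) t = deriv (deriv v) t - deriv (deriv u) t := by
    rw [hderiv]
    exact deriv_sub (hv' t) (hu' t)
  refine sub_nonneg.1 (nonneg_of_boundary_nonneg (hv.sub hu).continuous.continuousOn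
    (fun t ht hneg ↦ ?_) (sub_nonneg.2 ha) (sub_nonneg.2 hb) ht)
  rw [Pi.sub_apply] at hneg
  rw [hderiv2]
  nlinarith [hineq t ht]

theorem hasDerivAt_exp_mul_sub (c d t : ℝ) :
    HasDerivAt (fun t ↦ exp (c * (t - d))) (c * exp (c * (t - d))) t := by
  simpa [mul_comm] using (((hasDerivAt_id t).sub_const d).const_mul c).exp

theorem exp_neg_mul_mul_exp_mul (c x : ℝ) : exp (-c * x) * exp (c * x) = 1 := by
  rw [← exp_add, neg_mul, neg_add_cancel, exp_zero]

theorem Continuous.hasDerivAt_integral_lower {f : ℝ → ℝ} (hf : Continuous f) (b t : ℝ) :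
    HasDerivAt (fun u ↦ ∫ x in u..b, f x) (-f t) t :=
  intervalIntegral.integral_hasDerivAt_left (hf.intervalIntegrable t b)
    (hf.stronglyMeasurableAtFilter volume _) hf.continuousAt

/-- Variation of constants for `Φ'' = σ²Φ - F`. The integrals run up to `t` rather than over
`[a, b]`, so that `Φ` is twice differentiable on all of `ℝ`. -/
noncomputable def expSolution (σ α β a b : ℝ) (F : ℝ → ℝ) (t : ℝ) : ℝ :=
  exp (-σ * (t - a)) * (α + (2 * σ)⁻¹ * ∫ s in a..t, exp (σ * (s - a)) * F s) +
    exp (σ * (t - b)) * (β + (2 * σ)⁻¹ * ∫ s in t..b, exp (-σ * (s - b)) * F s)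

section expSolution

variable {σ α β a b : ℝ} {F : ℝ → ℝ}

theorem hasDerivAt_expSolution (hF : Continuous F) (t : ℝ) :
    HasDerivAt (expSolution σ α β a b F)
      (σ * (exp (σ * (t - b)) * (β + (2 * σ)⁻¹ * ∫ s in t..b, exp (-σ * (s - b)) * F s) -
        exp (-σ * (t - a)) * (α + (2 * σ)⁻¹ * ∫ s in a..t, exp (σ * (s - a)) * F s))) t := by
  have hcont (c d : ℝ) : Continuous fun s ↦ exp (c * (s - d)) * F s := by fun_prop
  have hA := (((hcont σ a).integral_hasStrictDerivAt a t).hasDerivAt.const_mul (2 * σ)⁻¹).const_add α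
  have hB := (((hcont (-σ) b).hasDerivAt_integral_lower b t).const_mul (2 * σ)⁻¹).const_add β
  refine (((hasDerivAt_exp_mul_sub (-σ) a t).mul hA).add
    ((hasDerivAt_exp_mul_sub σ b t).mul hB)).congr_deriv ?_
  linear_combination (2 * σ)⁻¹ * F t *
    (exp_neg_mul_mul_exp_mul σ (t - a) - exp_neg_mul_mul_exp_mul σ (t - b))

theorem hasDerivAt_deriv_expSolution (hσ : σ ≠ 0) (hF : Continuous F) (t : ℝ) :
    HasDerivAt (deriv (expSolution σ α β a b F)) (σ ^ 2 * expSolution σ α β a b F t - F t) t := by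
  rw [show deriv (expSolution σ α β a b F) = _ from
    funext fun t ↦ (hasDerivAt_expSolution hF t).deriv]
  have hcont (c d : ℝ) : Continuous fun s ↦ exp (c * (s - d)) * F s := by fun_prop
  have hA := (((hcont σ a).integral_hasStrictDerivAt a t).hasDerivAt.const_mul (2 * σ)⁻¹).const_add α
  have hB := (((hcont (-σ) b).hasDerivAt_integral_lower b t).const_mul (2 * σ)⁻¹).const_add β
  refine ((((hasDerivAt_exp_mul_sub σ b t).mul hB).sub
    ((hasDerivAt_exp_mul_sub (-σ) a t).mul hA)).const_mul σ).congr_deriv ?_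
  have hσ2 : σ * (2 * σ)⁻¹ = 1 / 2 := by field_simp
  unfold expSolution
  linear_combination (-(σ * (2 * σ)⁻¹) * F t) *
    (exp_neg_mul_mul_exp_mul σ (t - a) + exp_neg_mul_mul_exp_mul σ (t - b)) - 2 * F t * hσ2

theorem expSolution_eq (hF : Continuous F) {t : ℝ} (ht : t ∈ Icc a b) :
    expSolution σ α β a b F t = α * exp (-σ * (t - a)) + β * exp (σ * (t - b)) +
      (2 * σ)⁻¹ * ∫ s in a..b, exp (-σ * |t - s|) * F s := by
  have hk : Continuous fun s ↦ exp (-σ * |t - s|) * F s := by fun_prop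
  have hleft : ∫ s in a..t, exp (-σ * |t - s|) * F s =
      exp (-σ * (t - a)) * ∫ s in a..t, exp (σ * (s - a)) * F s := by
    rw [← intervalIntegral.integral_const_mul]
    refine intervalIntegral.integral_congr fun s hs ↦ ?_
    rw [uIcc_of_le ht.1] at hs
    rw [abs_of_nonneg (sub_nonneg.2 hs.2), ← mul_assoc, ← exp_add]
    ring_nf
  have hright : ∫ s in t..b, exp (-σ * |t - s|) * F s =
      exp (σ * (t - b)) * ∫ s in t..b, exp (-σ * (s - b)) * F s := by
    rw [← intervalIntegral.integral_const_mul]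
    refine intervalIntegral.integral_congr fun s hs ↦ ?_
    rw [uIcc_of_le ht.2] at hs
    rw [abs_of_nonpos (sub_nonpos.2 hs.1), ← mul_assoc, ← exp_add]
    ring_nf
  rw [← intervalIntegral.integral_add_adjacent_intervals (hk.intervalIntegrable a t)
    (hk.intervalIntegrable t b), hleft, hright, expSolution]
  ring

theorem le_expSolution_left (hσ : 0 ≤ σ) (hab : a ≤ b) (hβ : 0 ≤ β)
    (hF : ∀ s ∈ Icc a b, 0 ≤ F s) : α ≤ expSolution σ α β a b F a := by
  have hI : 0 ≤ ∫ s in a..b, exp (-σ * (s - b)) * F s :=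
    intervalIntegral.integral_nonneg hab fun s hs ↦ mul_nonneg (exp_pos _).le (hF s hs)
  simp only [expSolution, sub_self, mul_zero, exp_zero, intervalIntegral.integral_same, one_mul,
    add_zero]
  exact le_add_of_nonneg_right (mul_nonneg (exp_pos _).le (by positivity))

theorem le_expSolution_right (hσ : 0 ≤ σ) (hab : a ≤ b) (hα : 0 ≤ α)
    (hF : ∀ s ∈ Icc a b, 0 ≤ F s) : β ≤ expSolution σ α β a b F b := by
  have hI : 0 ≤ ∫ s in a..b, exp (σ * (s - a)) * F s :=
    intervalIntegral.integral_nonneg hab fun s hs ↦ mul_nonneg (exp_pos _).le (hF s hs)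
  simp only [expSolution, sub_self, mul_zero, exp_zero, intervalIntegral.integral_same, one_mul,
    add_zero]
  exact le_add_of_nonneg_left (mul_nonneg (exp_pos _).le (by positivity))

end expSolution

theorem mul_exp_add_mul_exp_le {σ α β : ℝ} (hσ : 0 ≤ σ) (hα : 0 ≤ α) (hβ : 0 ≤ β) (t T : ℝ) :
    α * exp (-σ * (t + T)) + β * exp (σ * (t - T)) ≤ (α + β) * exp (σ * (|t| - T)) := by
  have h₁ : exp (-σ * (t + T)) ≤ exp (σ * (|t| - T)) :=
    exp_le_exp.2 (by nlinarith [neg_abs_le t])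
  have h₂ : exp (σ * (t - T)) ≤ exp (σ * (|t| - T)) :=
    exp_le_exp.2 (mul_le_mul_of_nonneg_left (by linarith [le_abs_self t]) hσ)
  nlinarith

/-- Exponential decay estimate for nonnegative subsolutions of
`Θ'' ≥ σ²Θ − F` on `[−T, T]` (Lemma 4.9). -/
theorem exp_decay_subsolution (σ T : ℝ) (hσ : 0 < σ) (hT : 0 < T)
    (Θ F : ℝ → ℝ)
    (hΘ : ContDiff ℝ 2 Θ) (hF : Continuous F)
    (hΘpos : ∀ t ∈ Icc (-T) T, 0 ≤ Θ t)
    (hFpos : ∀ t ∈ Icc (-T) T, 0 ≤ F t)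
    (hsub : ∀ t ∈ Icc (-T) T, σ ^ 2 * Θ t - F t ≤ deriv (deriv Θ) t) :
    ∀ t ∈ Icc (-T) T,
      Θ t ≤ (Θ T + Θ (-T)) * Real.exp (σ * (|t| - T)) / (1 - Real.exp (-4 * σ * T))
        + (1 / (2 * σ)) * ∫ s in (-T)..T, Real.exp (-σ * |t - s|) * F s := by
  intro t ht
  have hTT : -T ≤ T := by linarith
  have hΘT : 0 ≤ Θ T := hΘpos T ⟨hTT, le_rfl⟩
  have hΘnT : 0 ≤ Θ (-T) := hΘpos (-T) ⟨le_rfl, hTT⟩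
  set Φ := expSolution σ (Θ (-T)) (Θ T) (-T) T F
  have hΦ'' (t : ℝ) : HasDerivAt (deriv Φ) (σ ^ 2 * Φ t - F t) t :=
    hasDerivAt_deriv_expSolution hσ.ne' hF t
  have hΘΦ : Θ t ≤ Φ t :=
    le_of_boundary_le (pow_pos hσ 2) (hΘ.differentiable two_ne_zero)
      ((hΘ.iterate_deriv' 1 1).differentiable one_ne_zero)
      (fun t ↦ (hasDerivAt_expSolution hF t).differentiableAt) (fun t ↦ (hΦ'' t).differentiableAt)
      (fun s hs ↦ by rw [(hΦ'' s).deriv]; linarith [hsub s (Ioo_subset_Icc_self hs)])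
      (le_expSolution_left hσ.le hTT hΘT hFpos) (le_expSolution_right hσ.le hTT hΘnT hFpos) ht
  have hD : 0 < 1 - exp (-4 * σ * T) := sub_pos.2 (exp_lt_one_iff.2 (by nlinarith))
  have hexp := mul_exp_add_mul_exp_le hσ.le hΘnT hΘT t T
  rw [add_comm (Θ (-T))] at hexp
  calc Θ t ≤ Φ t := hΘΦ
    _ = _ := expSolution_eq hF ht
    _ ≤ _ := by
      rw [sub_neg_eq_add, one_div]
      gcongr
      exact hexp.trans (le_div_self (by positivity) hD (by linarith [exp_pos (-4 * σ * T)]))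
end

section
/- Let K be a positive integer, let α be a real skew-symmetric K×K matrix, and let C > 0 be a Poincaré constant for α, i.e. assume that every twice continuously differentiable 2π-periodic map w: ℝ → ℝ^K satisfies ∫₀^{2π} ‖w' + α·w‖² dθ ≤ C ∫₀^{2π} ‖w'' + 2α·w' + α²·w‖² dθ. Let u: ℝ × ℝ → ℝ^K be a smooth map, 2π-periodic in the second variable θ, and set f(t,θ) := ∂_t² u + ∂_θ² u + 2α·∂_θ u + α²·u. Then the angular energy Θ(t) := ∫₀^{2π} ‖∂_θ u(t,θ) + α·u(t,θ)‖² dθ satisfies, for all t, Θ''(t) ≥ (1/C)·Θ(t) − 8 ∫₀^{2π} ‖f(t,θ)‖² dθ. -/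
open Real MeasureTheory intervalIntegral
open scoped Matrix RealInnerProductSpace

namespace AngularAux

section NS
variable {F : Type*} [NormedAddCommGroup F] [NormedSpace ℝ F]

noncomputable def pd1 (f : ℝ × ℝ → F) (p : ℝ × ℝ) : F := fderiv ℝ f p (1, 0)
noncomputable def pd2 (f : ℝ × ℝ → F) (p : ℝ × ℝ) : F := fderiv ℝ f p (0, 1)

noncomputable def tw (L : F →L[ℝ] F) (f : ℝ × ℝ → F) : ℝ × ℝ → F :=
  fun p => pd2 f p + L (f p)

variable {f : ℝ × ℝ → F} {L : F →L[ℝ] F}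

lemma contDiff_pd1 (hf : ContDiff ℝ (⊤ : ℕ∞) f) : ContDiff ℝ (⊤ : ℕ∞) (pd1 f) :=
  (hf.fderiv_right (le_of_eq (by simp))).clm_apply contDiff_const

lemma contDiff_pd2 (hf : ContDiff ℝ (⊤ : ℕ∞) f) : ContDiff ℝ (⊤ : ℕ∞) (pd2 f) :=
  (hf.fderiv_right (le_of_eq (by simp))).clm_apply contDiff_const

lemma contDiff_tw (hf : ContDiff ℝ (⊤ : ℕ∞) f) : ContDiff ℝ (⊤ : ℕ∞) (tw L f) :=
  (contDiff_pd2 hf).add (L.contDiff.comp hf)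

lemma hasDerivAt_slice1 (hf : ContDiff ℝ (⊤ : ℕ∞) f) (t θ : ℝ) :
    HasDerivAt (fun s => f (s, θ)) (pd1 f (t, θ)) t := by
  have h1 : HasFDerivAt f (fderiv ℝ f (t, θ)) (t, θ) :=
    (hf.differentiable (by simp) (t, θ)).hasFDerivAt
  have h2 : HasDerivAt (fun s : ℝ => ((s, θ) : ℝ × ℝ)) (1, 0) t :=
    (hasDerivAt_id t).prodMk (hasDerivAt_const t θ)
  simpa [pd1, Function.comp_def] using h1.comp_hasDerivAt t h2

lemma hasDerivAt_slice2 (hf : ContDiff ℝ (⊤ : ℕ∞) f) (t θ : ℝ) :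
    HasDerivAt (fun θ' => f (t, θ')) (pd2 f (t, θ)) θ := by
  have h1 : HasFDerivAt f (fderiv ℝ f (t, θ)) (t, θ) :=
    (hf.differentiable (by simp) (t, θ)).hasFDerivAt
  have h2 : HasDerivAt (fun θ' : ℝ => ((t, θ') : ℝ × ℝ)) (0, 1) θ :=
    (hasDerivAt_const θ t).prodMk (hasDerivAt_id θ)
  simpa [pd2, Function.comp_def] using h1.comp_hasDerivAt θ h2

lemma pd_comm (hf : ContDiff ℝ (⊤ : ℕ∞) f) : pd1 (pd2 f) = pd2 (pd1 f) := by
  funext p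
  have hc : DifferentiableAt ℝ (fderiv ℝ f) p :=
    ((hf.fderiv_right (m := (⊤ : ℕ∞)) (le_of_eq (by simp))).differentiable (by simp)) p
  have e2 : pd2 f = fun q => fderiv ℝ f q (0, 1) := rfl
  have e1 : pd1 f = fun q => fderiv ℝ f q (1, 0) := rfl
  have h1 : pd1 (pd2 f) p = fderiv ℝ (fderiv ℝ f) p (1, 0) (0, 1) := by
    simp only [pd1, e2]
    rw [fderiv_clm_apply hc (differentiableAt_const _)]
    simp
  have h2 : pd2 (pd1 f) p = fderiv ℝ (fderiv ℝ f) p (0, 1) (1, 0) := by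
    simp only [pd2, e1]
    rw [fderiv_clm_apply hc (differentiableAt_const _)]
    simp
  rw [h1, h2, (hf.contDiffAt.isSymmSndFDerivAt (by rw [minSmoothness_of_isRCLikeNormedField]; exact WithTop.coe_le_coe.mpr le_top)).eq]

lemma fderiv_tw_apply (hf : ContDiff ℝ (⊤ : ℕ∞) f) (p : ℝ × ℝ) (c : ℝ × ℝ) :
    fderiv ℝ (tw L f) p c = fderiv ℝ (pd2 f) p c + L (fderiv ℝ f p c) := by
  have hd2 : DifferentiableAt ℝ (pd2 f) p := (contDiff_pd2 hf).differentiable (by simp) p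
  have hdf : DifferentiableAt ℝ f p := (hf.differentiable (by simp)) p
  have hLf : HasFDerivAt (fun q => L (f q)) (L.comp (fderiv ℝ f p)) p :=
    L.hasFDerivAt.comp p hdf.hasFDerivAt
  have : fderiv ℝ (tw L f) p = fderiv ℝ (pd2 f) p + L.comp (fderiv ℝ f p) := by
    have := (hd2.hasFDerivAt.add hLf).fderiv
    simp only [Pi.add_def] at this; exact this
  simp [this]

lemma pd1_tw (hf : ContDiff ℝ (⊤ : ℕ∞) f) : pd1 (tw L f) = tw L (pd1 f) := by
  funext p
  have h := fderiv_tw_apply (L := L) hf p (1, 0)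
  have h2 : pd1 (pd2 f) p = pd2 (pd1 f) p := by rw [pd_comm hf]
  show fderiv ℝ (tw L f) p (1, 0) = pd2 (pd1 f) p + L (pd1 f p)
  rw [h, ← h2]
  rfl

lemma pd2_tw (hf : ContDiff ℝ (⊤ : ℕ∞) f) :
    pd2 (tw L f) = fun p => pd2 (pd2 f) p + L (pd2 f p) := by
  funext p
  exact fderiv_tw_apply hf p (0, 1)

lemma pd1_per (hf : ContDiff ℝ (⊤ : ℕ∞) f) (hper : ∀ s θ, f (s, θ + 2 * π) = f (s, θ)) :
    ∀ s θ, pd1 f (s, θ + 2 * π) = pd1 f (s, θ) := by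
  intro s θ
  rw [← (hasDerivAt_slice1 hf s (θ + 2 * π)).deriv, ← (hasDerivAt_slice1 hf s θ).deriv]
  congr 1
  funext s'
  exact hper s' θ

lemma pd2_per (hf : ContDiff ℝ (⊤ : ℕ∞) f) (hper : ∀ s θ, f (s, θ + 2 * π) = f (s, θ)) :
    ∀ s θ, pd2 f (s, θ + 2 * π) = pd2 f (s, θ) := by
  intro s θ
  rw [← (hasDerivAt_slice2 hf s (θ + 2 * π)).deriv, ← (hasDerivAt_slice2 hf s θ).deriv]
  have h : (fun θ' => f (s, θ')) = fun θ' => f (s, θ' + 2 * π) :=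
    funext fun θ' => (hper s θ').symm
  calc deriv (fun θ' => f (s, θ')) (θ + 2 * π)
      = deriv (fun θ' => f (s, θ' + 2 * π)) θ := (deriv_comp_add_const _ _ _).symm
    _ = deriv (fun θ' => f (s, θ')) θ := by rw [← h]

lemma tw_per (hf : ContDiff ℝ (⊤ : ℕ∞) f) (hper : ∀ s θ, f (s, θ + 2 * π) = f (s, θ)) :
    ∀ s θ, tw L f (s, θ + 2 * π) = tw L f (s, θ) := by
  intro s θ
  simp only [tw, pd2_per hf hper s θ, hper s θ]

end NS

/-- Differentiation under the interval integral, for jointly continuous data. -/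
lemma hasDerivAt_param (G G' : ℝ → ℝ → ℝ)
    (hG : Continuous fun p : ℝ × ℝ => G p.1 p.2)
    (hG' : Continuous fun p : ℝ × ℝ => G' p.1 p.2)
    (hd : ∀ s θ : ℝ, HasDerivAt (fun s' => G s' θ) (G' s θ) s) (s₀ : ℝ) :
    HasDerivAt (fun s => ∫ θ in (0:ℝ)..(2 * π), G s θ)
      (∫ θ in (0:ℝ)..(2 * π), G' s₀ θ) s₀ := by
  obtain ⟨M, hM⟩ :=
    ((isCompact_Icc (a := s₀ - 1) (b := s₀ + 1)).prod
      (isCompact_Icc (a := (0:ℝ)) (b := 2 * π))).exists_bound_of_continuousOn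
      hG'.continuousOn
  have hsub : Set.uIoc (0:ℝ) (2 * π) ⊆ Set.Icc (0:ℝ) (2 * π) := by
    rw [Set.uIoc_of_le (by positivity)]
    exact Set.Ioc_subset_Icc_self
  have key := intervalIntegral.hasDerivAt_integral_of_dominated_loc_of_deriv_le
    (F := G) (F' := G') (x₀ := s₀) (a := (0:ℝ)) (b := 2 * π)
    (bound := fun _ => M) (s := Metric.ball s₀ 1) (μ := MeasureTheory.volume) (Metric.ball_mem_nhds s₀ one_pos)
    (Filter.Eventually.of_forall fun x =>
      ((hG.comp (Continuous.prodMk_right x)).aestronglyMeasurable))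
    ((hG.comp (Continuous.prodMk_right s₀)).intervalIntegrable _ _)
    ((hG'.comp (Continuous.prodMk_right s₀)).aestronglyMeasurable)
    (Filter.Eventually.of_forall fun θ hθ x hx => by
      have hx' : x ∈ Set.Icc (s₀ - 1) (s₀ + 1) := by
        rw [Real.ball_eq_Ioo] at hx
        exact Set.Ioo_subset_Icc_self hx
      exact hM (x, θ) ⟨hx', hsub hθ⟩)
    (intervalIntegrable_const)
    (Filter.Eventually.of_forall fun θ _ x _ => hd x θ)
  exact key.2

section IP
variable {E : Type*} [NormedAddCommGroup E] [InnerProductSpace ℝ E]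

/-- continuity of a θ-slice -/
lemma contSlice {g : ℝ × ℝ → E} (hg : Continuous g) (t : ℝ) :
    Continuous fun θ => g (t, θ) := hg.comp (Continuous.prodMk_right t)

/-- Integration by parts on the circle against the twisted derivative. -/
lemma integral_inner_tw (L : E →L[ℝ] E) (hL : ∀ x y : E, ⟪L x, y⟫ = -⟪x, L y⟫)
    {a b : ℝ × ℝ → E} (ha : ContDiff ℝ (⊤ : ℕ∞) a) (hb : ContDiff ℝ (⊤ : ℕ∞) b) (t : ℝ)
    (hpa : ∀ θ, a (t, θ + 2 * π) = a (t, θ)) (hpb : ∀ θ, b (t, θ + 2 * π) = b (t, θ)) :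
    ∫ θ in (0:ℝ)..(2 * π), ⟪a (t, θ), tw L b (t, θ)⟫
      = - ∫ θ in (0:ℝ)..(2 * π), ⟪tw L a (t, θ), b (t, θ)⟫ := by
  have cta : Continuous fun θ => a (t, θ) := contSlice ha.continuous t
  have ctb : Continuous fun θ => b (t, θ) := contSlice hb.continuous t
  have ctpa : Continuous fun θ => pd2 a (t, θ) := contSlice (contDiff_pd2 ha).continuous t
  have ctpb : Continuous fun θ => pd2 b (t, θ) := contSlice (contDiff_pd2 hb).continuous t
  have ctta : Continuous fun θ => tw L a (t, θ) := contSlice (contDiff_tw ha).continuous t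
  have cttb : Continuous fun θ => tw L b (t, θ) := contSlice (contDiff_tw hb).continuous t
  have hsum : (∫ θ in (0:ℝ)..(2 * π),
      (⟪a (t, θ), pd2 b (t, θ)⟫ + ⟪pd2 a (t, θ), b (t, θ)⟫)) = 0 := by
    have hder : ∀ θ ∈ Set.uIcc (0:ℝ) (2 * π),
        HasDerivAt (fun θ' => ⟪a (t, θ'), b (t, θ')⟫)
          (⟪a (t, θ), pd2 b (t, θ)⟫ + ⟪pd2 a (t, θ), b (t, θ)⟫) θ := fun θ _ =>
      (hasDerivAt_slice2 ha t θ).inner ℝ (hasDerivAt_slice2 hb t θ)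
    rw [intervalIntegral.integral_eq_sub_of_hasDerivAt hder
      (((Continuous.inner (𝕜 := ℝ) cta ctpb).add (Continuous.inner (𝕜 := ℝ) ctpa ctb)).intervalIntegrable _ _)]
    have e1 := hpa 0
    have e2 := hpb 0
    rw [zero_add] at e1 e2
    rw [e1, e2]
    ring
  have hptwise : ∀ θ : ℝ, ⟪a (t, θ), tw L b (t, θ)⟫ + ⟪tw L a (t, θ), b (t, θ)⟫
      = ⟪a (t, θ), pd2 b (t, θ)⟫ + ⟪pd2 a (t, θ), b (t, θ)⟫ := by
    intro θ
    simp only [tw, inner_add_right, inner_add_left]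
    have := hL (a (t, θ)) (b (t, θ))
    linarith
  have hadd := intervalIntegral.integral_add
    ((Continuous.inner (𝕜 := ℝ) cta cttb).intervalIntegrable (μ := MeasureTheory.volume) 0 (2 * π))
    ((Continuous.inner (𝕜 := ℝ) ctta ctb).intervalIntegrable (μ := MeasureTheory.volume) 0 (2 * π))
  have : (∫ θ in (0:ℝ)..(2 * π),
      (⟪a (t, θ), tw L b (t, θ)⟫ + ⟪tw L a (t, θ), b (t, θ)⟫)) = 0 := by
    rw [intervalIntegral.integral_congr (g :=
      fun θ => ⟪a (t, θ), pd2 b (t, θ)⟫ + ⟪pd2 a (t, θ), b (t, θ)⟫)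
      (fun θ _ => hptwise θ)]
    exact hsum
  rw [hadd] at this
  linarith


theorem key (L : E →L[ℝ] E) (hL : ∀ x y : E, ⟪L x, y⟫ = -⟪x, L y⟫)
    (U : ℝ × ℝ → E) (hU : ContDiff ℝ (⊤ : ℕ∞) U)
    (hper : ∀ s θ, U (s, θ + 2 * π) = U (s, θ)) (t : ℝ) :
    (∫ θ in (0:ℝ)..(2 * π), ‖tw L (tw L U) (t, θ)‖ ^ 2)
      - (∫ θ in (0:ℝ)..(2 * π), ‖pd1 (pd1 U) (t, θ) + tw L (tw L U) (t, θ)‖ ^ 2)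
    ≤ deriv (deriv fun s : ℝ => ∫ θ in (0:ℝ)..(2 * π), ‖tw L U (s, θ)‖ ^ 2) t := by
  set v : ℝ × ℝ → E := tw L U with hv_def
  set w : ℝ × ℝ → E := tw L v with hw_def
  have hv : ContDiff ℝ (⊤ : ℕ∞) v := contDiff_tw hU
  have hw : ContDiff ℝ (⊤ : ℕ∞) w := contDiff_tw hv
  set vt : ℝ × ℝ → E := pd1 v with hvt_def
  set vtt : ℝ × ℝ → E := pd1 vt with hvtt_def
  have hvt : ContDiff ℝ (⊤ : ℕ∞) vt := contDiff_pd1 hv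
  have hvtt : ContDiff ℝ (⊤ : ℕ∞) vtt := contDiff_pd1 hvt
  set G : ℝ × ℝ → E := pd1 (pd1 U) with hG_def
  have hG : ContDiff ℝ (⊤ : ℕ∞) G := contDiff_pd1 (contDiff_pd1 hU)
  have hperv : ∀ s θ, v (s, θ + 2 * π) = v (s, θ) := tw_per hU hper
  have hperw : ∀ s θ, w (s, θ + 2 * π) = w (s, θ) := tw_per hv hperv
  have hperG : ∀ s θ, G (s, θ + 2 * π) = G (s, θ) :=
    pd1_per (contDiff_pd1 hU) (pd1_per hU hper)
  -- identification of the second t-derivative of v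
  have hvtt_eq : vtt = tw L G := by
    rw [hvtt_def, hvt_def, hv_def, hG_def, pd1_tw hU, pd1_tw (contDiff_pd1 hU)]
  -- Step A: first derivative of the energy
  have hA : ∀ s : ℝ, HasDerivAt (fun s' => ∫ θ in (0:ℝ)..(2 * π), ‖v (s', θ)‖ ^ 2)
      (∫ θ in (0:ℝ)..(2 * π), 2 * ⟪v (s, θ), vt (s, θ)⟫) s := by
    intro s
    apply hasDerivAt_param (G := fun s' θ => ‖v (s', θ)‖ ^ 2)
      (G' := fun s' θ => 2 * ⟪v (s', θ), vt (s', θ)⟫)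
    · exact (hv.continuous.norm.pow 2)
    · exact (continuous_const.mul
        (Continuous.inner (𝕜 := ℝ) hv.continuous hvt.continuous))
    · intro s' θ
      have h := hasDerivAt_slice1 hv s' θ
      have hinner := h.inner ℝ h
      have h2 : (fun s'' => ⟪v (s'', θ), v (s'', θ)⟫) = fun s'' => ‖v (s'', θ)‖ ^ 2 :=
        funext fun s'' => real_inner_self_eq_norm_sq _
      rw [← h2]
      refine hinner.congr_deriv (Eq.symm ?_)
      rw [real_inner_comm (vt (s', θ)) (v (s', θ))]
      ring
  -- Step B: second derivative of the energy
  have hB : HasDerivAt (fun s' => ∫ θ in (0:ℝ)..(2 * π), 2 * ⟪v (s', θ), vt (s', θ)⟫)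
      (∫ θ in (0:ℝ)..(2 * π),
        (2 * ⟪vt (t, θ), vt (t, θ)⟫ + 2 * ⟪v (t, θ), vtt (t, θ)⟫)) t := by
    apply hasDerivAt_param (G := fun s' θ => 2 * ⟪v (s', θ), vt (s', θ)⟫)
      (G' := fun s' θ => 2 * ⟪vt (s', θ), vt (s', θ)⟫ + 2 * ⟪v (s', θ), vtt (s', θ)⟫)
    · exact (continuous_const.mul
        (Continuous.inner (𝕜 := ℝ) hv.continuous hvt.continuous))
    · exact ((continuous_const.mul
        (Continuous.inner (𝕜 := ℝ) hvt.continuous hvt.continuous)).add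
        (continuous_const.mul
          (Continuous.inner (𝕜 := ℝ) hv.continuous hvtt.continuous)))
    · intro s' θ
      have h1 := hasDerivAt_slice1 hv s' θ
      have h2 := hasDerivAt_slice1 hvt s' θ
      have hinner := (h1.inner ℝ h2).const_mul (2 : ℝ)
      refine hinner.congr_deriv (Eq.symm ?_)
      show 2 * ⟪vt (s', θ), vt (s', θ)⟫ + 2 * ⟪v (s', θ), vtt (s', θ)⟫
          = 2 * (⟪v (s', θ), vtt (s', θ)⟫ + ⟪vt (s', θ), vt (s', θ)⟫)
      ring
  -- the second derivative of the energy
  have hD2 : deriv (deriv fun s : ℝ => ∫ θ in (0:ℝ)..(2 * π), ‖v (s, θ)‖ ^ 2) t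
      = ∫ θ in (0:ℝ)..(2 * π),
          (2 * ⟪vt (t, θ), vt (t, θ)⟫ + 2 * ⟪v (t, θ), vtt (t, θ)⟫) := by
    have hd1 : (deriv fun s : ℝ => ∫ θ in (0:ℝ)..(2 * π), ‖v (s, θ)‖ ^ 2)
        = fun s => ∫ θ in (0:ℝ)..(2 * π), 2 * ⟪v (s, θ), vt (s, θ)⟫ :=
      funext fun s => (hA s).deriv
    rw [hd1, hB.deriv]
  -- continuity of slices at time t
  have cv := contSlice hv.continuous t
  have cw := contSlice hw.continuous t
  have cvt := contSlice hvt.continuous t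
  have cvtt := contSlice hvtt.continuous t
  have cG := contSlice hG.continuous t
  -- Step C : integration by parts
  have ibp := integral_inner_tw L hL hv hG t (fun θ => hperv t θ) (fun θ => hperG t θ)
  rw [← hvtt_eq] at ibp
  -- ibp : ∫ ⟪v, vtt⟫ = - ∫ ⟪tw L v, G⟫ = - ∫ ⟪w, G⟫
  have hE4 : (∫ θ in (0:ℝ)..(2 * π), ⟪v (t, θ), vtt (t, θ)⟫)
      = - ∫ θ in (0:ℝ)..(2 * π), ⟪w (t, θ), G (t, θ)⟫ := ibp
  have hE5 : (∫ θ in (0:ℝ)..(2 * π), ⟪w (t, θ), G (t, θ)⟫)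
      = (∫ θ in (0:ℝ)..(2 * π), ⟪w (t, θ), G (t, θ) + w (t, θ)⟫)
        - ∫ θ in (0:ℝ)..(2 * π), ‖w (t, θ)‖ ^ 2 := by
    rw [← intervalIntegral.integral_sub
      (f := fun θ => ⟪w (t, θ), G (t, θ) + w (t, θ)⟫) (g := fun θ => ‖w (t, θ)‖ ^ 2)
      ((Continuous.inner (𝕜 := ℝ) cw (cG.add cw)).intervalIntegrable _ _)
      ((cw.norm.pow 2).intervalIntegrable _ _)]
    apply intervalIntegral.integral_congr
    intro θ _
    simp only [inner_add_right]
    rw [real_inner_self_eq_norm_sq]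
    ring
  -- splitting the second-derivative integral
  have hE2 : (∫ θ in (0:ℝ)..(2 * π),
        (2 * ⟪vt (t, θ), vt (t, θ)⟫ + 2 * ⟪v (t, θ), vtt (t, θ)⟫))
      = (∫ θ in (0:ℝ)..(2 * π), 2 * ⟪vt (t, θ), vt (t, θ)⟫)
        + 2 * ∫ θ in (0:ℝ)..(2 * π), ⟪v (t, θ), vtt (t, θ)⟫ := by
    rw [← intervalIntegral.integral_const_mul]
    exact intervalIntegral.integral_add
      ((continuous_const.mul (Continuous.inner (𝕜 := ℝ) cvt cvt)).intervalIntegrable _ _)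
      ((continuous_const.mul (Continuous.inner (𝕜 := ℝ) cv cvtt)).intervalIntegrable _ _)
  -- positivity of the first term
  have hE6 : (0:ℝ) ≤ ∫ θ in (0:ℝ)..(2 * π), 2 * ⟪vt (t, θ), vt (t, θ)⟫ := by
    apply intervalIntegral.integral_nonneg (by positivity)
    intro θ _
    have := real_inner_self_nonneg (x := vt (t, θ))
    linarith
  -- Cauchy–Schwarz / AM-GM bound
  have hE7 : 2 * (∫ θ in (0:ℝ)..(2 * π), ⟪w (t, θ), G (t, θ) + w (t, θ)⟫)
      ≤ (∫ θ in (0:ℝ)..(2 * π), ‖w (t, θ)‖ ^ 2)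
        + ∫ θ in (0:ℝ)..(2 * π), ‖G (t, θ) + w (t, θ)‖ ^ 2 := by
    rw [← intervalIntegral.integral_const_mul,
      ← intervalIntegral.integral_add
        (f := fun θ => ‖w (t, θ)‖ ^ 2) (g := fun θ => ‖G (t, θ) + w (t, θ)‖ ^ 2)
        ((cw.norm.pow 2).intervalIntegrable _ _)
        (((cG.add cw).norm.pow 2).intervalIntegrable _ _)]
    apply intervalIntegral.integral_mono_on (by positivity)
      ((continuous_const.mul
        (Continuous.inner (𝕜 := ℝ) cw (cG.add cw))).intervalIntegrable _ _)
      (((cw.norm.pow 2).add ((cG.add cw).norm.pow 2)).intervalIntegrable _ _)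
    intro θ _
    simp only [Pi.add_apply, Pi.pow_apply, Pi.mul_apply]
    have h1 := real_inner_le_norm (w (t, θ)) (G (t, θ) + w (t, θ))
    nlinarith [sq_nonneg (‖w (t, θ)‖ - ‖G (t, θ) + w (t, θ)‖)]
  -- put everything together
  have goal_eq : (∫ θ in (0:ℝ)..(2 * π), ‖pd1 (pd1 U) (t, θ) + w (t, θ)‖ ^ 2)
      = ∫ θ in (0:ℝ)..(2 * π), ‖G (t, θ) + w (t, θ)‖ ^ 2 := rfl
  rw [hD2, goal_eq]
  linarith [hE2, hE4, hE5, hE6, hE7]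

end IP

end AngularAux

open AngularAux

/-- The differential inequality (ee1) for the angular energy of a map on the
cylinder (Lemma 4.8 in the linear, flat-target case). -/
theorem angular_energy_differential_inequality (K : ℕ) (hK : 0 < K)
    (α : Matrix (Fin K) (Fin K) ℝ) (hα : αᵀ = -α) (C : ℝ) (hC : 0 < C)
    (hpoincare : ∀ w : ℝ → EuclideanSpace ℝ (Fin K),
      ContDiff ℝ 2 w → Function.Periodic w (2 * Real.pi) →
      (∫ θ in (0:ℝ)..(2 * Real.pi), ‖deriv w θ + matAct α (w θ)‖ ^ 2) ≤
        C * ∫ θ in (0:ℝ)..(2 * Real.pi),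
          ‖deriv (deriv w) θ + (2 : ℝ) • matAct α (deriv w θ)
            + matAct α (matAct α (w θ))‖ ^ 2)
    (u : ℝ → ℝ → EuclideanSpace ℝ (Fin K))
    (hu : ContDiff ℝ (⊤ : ℕ∞) (Function.uncurry u))
    (hper : ∀ t : ℝ, Function.Periodic (u t) (2 * Real.pi))
    (f : ℝ → ℝ → EuclideanSpace ℝ (Fin K))
    (hf : ∀ t θ : ℝ, f t θ =
      deriv (deriv fun s => u s θ) t
        + (deriv (deriv (u t)) θ + (2 : ℝ) • matAct α (deriv (u t) θ)
            + matAct α (matAct α (u t θ)))) :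
    ∀ t : ℝ,
      (1 / C) * (∫ θ in (0:ℝ)..(2 * Real.pi),
          ‖deriv (u t) θ + matAct α (u t θ)‖ ^ 2)
        - 8 * (∫ θ in (0:ℝ)..(2 * Real.pi), ‖f t θ‖ ^ 2)
      ≤ deriv (deriv fun s : ℝ =>
          ∫ θ in (0:ℝ)..(2 * Real.pi), ‖deriv (u s) θ + matAct α (u s θ)‖ ^ 2) t := by
  intro t
  set L : EuclideanSpace ℝ (Fin K) →L[ℝ] EuclideanSpace ℝ (Fin K) :=
    LinearMap.toContinuousLinearMap (Matrix.toEuclideanLin α) with hLdef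
  have hLapp : ∀ x : EuclideanSpace ℝ (Fin K), L x = matAct α x := fun x => by
    rw [hLdef]
    simp [matAct]
  have hL : ∀ x y : EuclideanSpace ℝ (Fin K), ⟪L x, y⟫ = -⟪x, L y⟫ := by
    intro x y
    have hadj := Matrix.toEuclideanLin_conjTranspose_eq_adjoint α
    have hH : αᴴ = αᵀ := rfl
    rw [hH, hα] at hadj
    have hneg : LinearMap.adjoint (Matrix.toEuclideanLin α) = - Matrix.toEuclideanLin α := by
      rw [← hadj, map_neg]
    have h1 : ⟪L x, y⟫ = ⟪(Matrix.toEuclideanLin α) x, y⟫ := by rw [hLdef]; simp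
    have h2 : ⟪x, L y⟫ = ⟪x, (Matrix.toEuclideanLin α) y⟫ := by rw [hLdef]; simp
    rw [h1, h2]
    calc ⟪(Matrix.toEuclideanLin α) x, y⟫
        = ⟪LinearMap.adjoint (Matrix.toEuclideanLin α) y, x⟫ := by
          rw [LinearMap.adjoint_inner_left, real_inner_comm]
      _ = -⟪x, (Matrix.toEuclideanLin α) y⟫ := by
          rw [hneg, LinearMap.neg_apply, inner_neg_left, real_inner_comm]
  set U : ℝ × ℝ → EuclideanSpace ℝ (Fin K) := Function.uncurry u with hUdef
  have hU : ContDiff ℝ (⊤ : ℕ∞) U := hu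
  have hperU : ∀ s θ : ℝ, U (s, θ + 2 * π) = U (s, θ) := fun s θ => hper s θ
  -- identifications
  have e_pd2U : ∀ s θ : ℝ, pd2 U (s, θ) = deriv (u s) θ := fun s θ =>
    ((hasDerivAt_slice2 hU s θ : HasDerivAt (u s) (pd2 U (s, θ)) θ).deriv).symm
  have e_v : ∀ s θ : ℝ, tw L U (s, θ) = deriv (u s) θ + matAct α (u s θ) := by
    intro s θ
    show pd2 U (s, θ) + L (U (s, θ)) = _
    rw [e_pd2U, hLapp]
    rfl
  have e_pd2pd2 : ∀ θ : ℝ, pd2 (pd2 U) (t, θ) = deriv (deriv (u t)) θ := by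
    intro θ
    have h : deriv (u t) = fun θ' => pd2 U (t, θ') := funext fun θ' => (e_pd2U t θ').symm
    rw [h]
    exact ((hasDerivAt_slice2 (contDiff_pd2 hU) t θ).deriv).symm
  have e_w : ∀ θ : ℝ, tw L (tw L U) (t, θ)
      = deriv (deriv (u t)) θ + (2 : ℝ) • matAct α (deriv (u t) θ)
        + matAct α (matAct α (u t θ)) := by
    intro θ
    have h1 : tw L (tw L U) (t, θ)
        = pd2 (pd2 U) (t, θ) + L (pd2 U (t, θ))
          + (L (pd2 U (t, θ)) + L (L (U (t, θ)))) := by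
      show pd2 (tw L U) (t, θ) + L (tw L U (t, θ)) = _
      rw [pd2_tw hU]
      show pd2 (pd2 U) (t, θ) + L (pd2 U (t, θ)) + L (pd2 U (t, θ) + L (U (t, θ))) = _
      rw [map_add]
    rw [h1, e_pd2pd2 θ, e_pd2U t θ]
    have h2 : ((2 : ℝ) • matAct α (deriv (u t) θ))
        = matAct α (deriv (u t) θ) + matAct α (deriv (u t) θ) := two_smul ℝ _
    rw [h2, hLapp, hLapp, hLapp]
    have h3 : U (t, θ) = u t θ := rfl
    rw [h3]
    abel
  have e_f : ∀ θ : ℝ, f t θ = pd1 (pd1 U) (t, θ) + tw L (tw L U) (t, θ) := by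
    intro θ
    rw [hf t θ]
    congr 1
    · have h1 : (deriv fun s => u s θ) = fun s => pd1 U (s, θ) :=
        funext fun s => (hasDerivAt_slice1 hU s θ).deriv
      rw [h1]
      exact (hasDerivAt_slice1 (contDiff_pd1 hU) t θ).deriv
    · exact (e_w θ).symm
  -- the energy function
  have eΘ : (fun s : ℝ => ∫ θ in (0:ℝ)..(2 * Real.pi),
        ‖deriv (u s) θ + matAct α (u s θ)‖ ^ 2)
      = fun s : ℝ => ∫ θ in (0:ℝ)..(2 * π), ‖tw L U (s, θ)‖ ^ 2 := by
    funext s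
    apply intervalIntegral.integral_congr
    intro θ _
    beta_reduce
    rw [e_v s θ]
  -- Poincaré inequality
  have hu_t : ContDiff ℝ 2 (u t) :=
    (hu.of_le (WithTop.coe_le_coe.mpr le_top)).comp (contDiff_const.prodMk contDiff_id)
  have hpo := hpoincare (u t) hu_t (hper t)
  have hpo1 : (∫ θ in (0:ℝ)..(2 * π), ‖deriv (u t) θ + matAct α (u t θ)‖ ^ 2)
      = ∫ θ in (0:ℝ)..(2 * π), ‖tw L U (t, θ)‖ ^ 2 :=
    intervalIntegral.integral_congr fun θ _ => by beta_reduce; rw [e_v t θ]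
  have hpo2 : (∫ θ in (0:ℝ)..(2 * π),
      ‖deriv (deriv (u t)) θ + (2 : ℝ) • matAct α (deriv (u t) θ)
        + matAct α (matAct α (u t θ))‖ ^ 2)
      = ∫ θ in (0:ℝ)..(2 * π), ‖tw L (tw L U) (t, θ)‖ ^ 2 :=
    intervalIntegral.integral_congr fun θ _ => by beta_reduce; rw [e_w θ]
  rw [hpo1, hpo2] at hpo
  -- the key differential inequality
  have hkey := key L hL U hU hperU t
  -- f matches
  have hFF : (∫ θ in (0:ℝ)..(2 * Real.pi), ‖f t θ‖ ^ 2)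
      = ∫ θ in (0:ℝ)..(2 * π), ‖pd1 (pd1 U) (t, θ) + tw L (tw L U) (t, θ)‖ ^ 2 :=
    intervalIntegral.integral_congr fun θ _ => by beta_reduce; rw [e_f θ]
  have hFFnonneg : (0:ℝ) ≤ ∫ θ in (0:ℝ)..(2 * π),
      ‖pd1 (pd1 U) (t, θ) + tw L (tw L U) (t, θ)‖ ^ 2 :=
    intervalIntegral.integral_nonneg (by positivity) fun θ _ => by positivity
  have hdiv : (1 / C) * (∫ θ in (0:ℝ)..(2 * π), ‖tw L U (t, θ)‖ ^ 2)
      ≤ ∫ θ in (0:ℝ)..(2 * π), ‖tw L (tw L U) (t, θ)‖ ^ 2 := by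
    have hpos : (0:ℝ) < 1 / C := by positivity
    have h2 := mul_le_mul_of_nonneg_left hpo (le_of_lt hpos)
    calc (1 / C) * (∫ θ in (0:ℝ)..(2 * π), ‖tw L U (t, θ)‖ ^ 2)
        ≤ (1 / C) * (C * ∫ θ in (0:ℝ)..(2 * π), ‖tw L (tw L U) (t, θ)‖ ^ 2) := h2
      _ = ∫ θ in (0:ℝ)..(2 * π), ‖tw L (tw L U) (t, θ)‖ ^ 2 := by
          field_simp
  rw [eΘ, hpo1, hFF]
  linarith [hkey, hdiv, hFFnonneg]
end

section
/- Let σ > 0 and T > 0. Suppose Θ: [−T, T] → ℝ is twice continuously differentiable with Θ ≥ 0, F: [−T, T] → ℝ is continuous with F ≥ 0, and Θ''(t) ≥ σ²Θ(t) − F(t) for all t ∈ [−T, T]. Then ∫_{−T}^{T} Θ(t) dt ≤ (2/σ)·(Θ(T) + Θ(−T))/(1 − e^{−4σT}) + (1/σ²)·∫_{−T}^{T} F(s) ds. -/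
/-!
Let `w` solve `w'' = σ²w − 1` on `[−T, T]` with `w(±T) = 0`, namely
`w(t) = (1 − cosh σt / cosh σT) / σ²`, so that `0 ≤ w ≤ 1/σ²`. Multiplying the inequality
`Θ'' − σ²Θ + F ≥ 0` by `w ≥ 0` and integrating, Green's identity moves both derivatives onto `w`
and leaves `∫ Θ ≤ (tanh σT / σ) (Θ(T) + Θ(−T)) + ∫ w F`; it remains to use `tanh σT < 1` and
`w ≤ 1/σ²`.
-/

open Real MeasureTheory Set intervalIntegral

theorem integral_green_second_identity {u u' u'' v v' v'' : ℝ → ℝ} {a b : ℝ}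
    (hu : ∀ x ∈ uIcc a b, HasDerivAt u (u' x) x) (hu' : ∀ x ∈ uIcc a b, HasDerivAt u' (u'' x) x)
    (hv : ∀ x ∈ uIcc a b, HasDerivAt v (v' x) x) (hv' : ∀ x ∈ uIcc a b, HasDerivAt v' (v'' x) x)
    (hint : IntervalIntegrable (fun x => u x * v'' x - u'' x * v x) volume a b) :
    ∫ x in a..b, (u x * v'' x - u'' x * v x) =
      (u b * v' b - u' b * v b) - (u a * v' a - u' a * v a) :=
  integral_eq_sub_of_hasDerivAt
    (fun x hx => (((hu x hx).mul (hv' x hx)).sub ((hu' x hx).mul (hv x hx))).congr_deriv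
      (by ring))
    hint

theorem integral_le_of_weight_of_sub_le_deriv_deriv {a b c : ℝ} {w w' w'' Θ Θ' Θ'' F : ℝ → ℝ}
    (hab : a ≤ b)
    (hw : ∀ x ∈ Icc a b, HasDerivAt w (w' x) x) (hw' : ∀ x ∈ Icc a b, HasDerivAt w' (w'' x) x)
    (hΘ : ∀ x ∈ Icc a b, HasDerivAt Θ (Θ' x) x) (hΘ' : ∀ x ∈ Icc a b, HasDerivAt Θ' (Θ'' x) x)
    (hΘ'' : ContinuousOn Θ'' (Icc a b)) (hF : ContinuousOn F (Icc a b))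
    (hw_ode : ∀ x ∈ Icc a b, w'' x = c * w x - 1) (hw_nonneg : ∀ x ∈ Icc a b, 0 ≤ w x)
    (hwa : w a = 0) (hwb : w b = 0) (hsub : ∀ x ∈ Icc a b, c * Θ x - F x ≤ Θ'' x) :
    ∫ x in a..b, Θ x ≤ w' a * Θ a - w' b * Θ b + ∫ x in a..b, w x * F x := by
  have hI : uIcc a b = Icc a b := uIcc_of_le hab
  have hwc : ContinuousOn w (Icc a b) := HasDerivAt.continuousOn hw
  have hΘc : ContinuousOn Θ (Icc a b) := HasDerivAt.continuousOn hΘ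
  have hw''c : ContinuousOn w'' (Icc a b) :=
    ((continuousOn_const.mul hwc).sub continuousOn_const).congr hw_ode
  have hgreen_int : IntervalIntegrable (fun x => w x * Θ'' x - w'' x * Θ x) volume a b :=
    ContinuousOn.intervalIntegrable (hI ▸ (hwc.mul hΘ'').sub (hw''c.mul hΘc))
  have hwF_int : IntervalIntegrable (fun x => w x * F x) volume a b :=
    ContinuousOn.intervalIntegrable (hI ▸ hwc.mul hF)
  calc ∫ x in a..b, Θ x
      ≤ ∫ x in a..b, ((w x * Θ'' x - w'' x * Θ x) + w x * F x) := by
        refine integral_mono_on hab (ContinuousOn.intervalIntegrable (hI ▸ hΘc))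
          (hgreen_int.add hwF_int) fun x hx => ?_
        rw [hw_ode x hx]
        nlinarith [mul_nonneg (hw_nonneg x hx) (sub_nonneg.2 (hsub x hx))]
    _ = w' a * Θ a - w' b * Θ b + ∫ x in a..b, w x * F x := by
        rw [integral_add hgreen_int hwF_int,
          integral_green_second_identity (hI ▸ hw) (hI ▸ hw') (hI ▸ hΘ) (hI ▸ hΘ') hgreen_int,
          hwa, hwb]
        ring

noncomputable def coshWeight (σ T t : ℝ) : ℝ := (1 - cosh (σ * t) / cosh (σ * T)) / σ ^ 2

section coshWeight

variable {σ T : ℝ}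

theorem continuous_coshWeight : Continuous (coshWeight σ T) := by
  unfold coshWeight
  fun_prop

theorem hasDerivAt_coshWeight (hσ : σ ≠ 0) (t : ℝ) :
    HasDerivAt (coshWeight σ T) (-(sinh (σ * t) / (σ * cosh (σ * T)))) t := by
  have h := ((((hasDerivAt_id t).const_mul σ).cosh.div_const (cosh (σ * T))).const_sub 1).div_const
    (σ ^ 2)
  refine h.congr_deriv ?_
  simp only [id, mul_one]
  field_simp

theorem hasDerivAt_deriv_coshWeight (hσ : σ ≠ 0) (t : ℝ) :
    HasDerivAt (fun t => -(sinh (σ * t) / (σ * cosh (σ * T))))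
      (σ ^ 2 * coshWeight σ T t - 1) t := by
  have h := (((hasDerivAt_id t).const_mul σ).sinh.div_const (σ * cosh (σ * T))).neg
  refine h.congr_deriv ?_
  simp only [coshWeight, id]
  field_simp
  ring

theorem coshWeight_self : coshWeight σ T T = 0 := by
  simp [coshWeight, (cosh_pos (σ * T)).ne']

theorem coshWeight_neg_self : coshWeight σ T (-T) = 0 := by
  simp [coshWeight, (cosh_pos (σ * T)).ne']

theorem coshWeight_nonneg {t : ℝ} (ht : t ∈ Icc (-T) T) : 0 ≤ coshWeight σ T t := by
  have hle : cosh (σ * t) ≤ cosh (σ * T) := by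
    rw [cosh_le_cosh, abs_mul, abs_mul]
    exact mul_le_mul_of_nonneg_left ((abs_le.2 ht).trans (le_abs_self T)) (abs_nonneg σ)
  unfold coshWeight
  exact div_nonneg (sub_nonneg.2 ((div_le_one (cosh_pos (σ * T))).2 hle)) (sq_nonneg σ)

theorem coshWeight_le_one_div_sq (t : ℝ) : coshWeight σ T t ≤ 1 / σ ^ 2 := by
  have : 0 ≤ cosh (σ * t) / cosh (σ * T) := div_nonneg (cosh_pos _).le (cosh_pos _).le
  unfold coshWeight
  gcongr
  linarith

theorem integral_coshWeight_mul_le {F : ℝ → ℝ} (hT : 0 ≤ T)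
    (hF : IntervalIntegrable F volume (-T) T) (hF_nonneg : ∀ t ∈ Icc (-T) T, 0 ≤ F t) :
    ∫ t in (-T)..T, coshWeight σ T t * F t ≤ 1 / σ ^ 2 * ∫ t in (-T)..T, F t := by
  rw [← intervalIntegral.integral_const_mul]
  exact integral_mono_on (by linarith) (hF.continuousOn_mul continuous_coshWeight.continuousOn)
    (hF.const_mul _)
    fun t ht => mul_le_mul_of_nonneg_right (coshWeight_le_one_div_sq t) (hF_nonneg t ht)

theorem integral_le_tanh_mul_add_integral_coshWeight_mul {Θ Θ' Θ'' F : ℝ → ℝ} (hσ : σ ≠ 0)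
    (hT : 0 ≤ T) (hΘ : ∀ t ∈ Icc (-T) T, HasDerivAt Θ (Θ' t) t)
    (hΘ' : ∀ t ∈ Icc (-T) T, HasDerivAt Θ' (Θ'' t) t) (hΘ'' : ContinuousOn Θ'' (Icc (-T) T))
    (hF : ContinuousOn F (Icc (-T) T)) (hsub : ∀ t ∈ Icc (-T) T, σ ^ 2 * Θ t - F t ≤ Θ'' t) :
    ∫ t in (-T)..T, Θ t ≤
      tanh (σ * T) / σ * (Θ T + Θ (-T)) + ∫ t in (-T)..T, coshWeight σ T t * F t := by
  have hbound := integral_le_of_weight_of_sub_le_deriv_deriv (by linarith)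
    (fun t _ => hasDerivAt_coshWeight hσ t) (fun t _ => hasDerivAt_deriv_coshWeight hσ t)
    hΘ hΘ' hΘ'' hF (fun _ _ => rfl) (fun _ => coshWeight_nonneg) coshWeight_neg_self
    coshWeight_self hsub
  convert hbound using 2
  rw [mul_neg, sinh_neg, tanh_eq_sinh_div_cosh]
  field_simp
  ring

end coshWeight

theorem tanh_le_two_div_one_sub_exp {x : ℝ} (hx : 0 < x) : tanh x ≤ 2 / (1 - exp (-4 * x)) := by
  have hexp : 0 < 1 - exp (-4 * x) := sub_pos.2 (exp_lt_one_iff.2 (by linarith))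
  calc tanh x ≤ 2 := by linarith [tanh_lt_one x]
    _ ≤ 2 / (1 - exp (-4 * x)) := le_div_self zero_le_two hexp (by linarith [exp_pos (-4 * x)])

/-- Integrated exponential decay estimate for nonnegative subsolutions of
`Θ'' ≥ σ²Θ − F` on `[−T, T]` (Corollary 4.10). -/
theorem integrated_exp_decay_subsolution (σ T : ℝ) (hσ : 0 < σ) (hT : 0 < T)
    (Θ F : ℝ → ℝ)
    (hΘ : ContDiff ℝ 2 Θ) (hF : Continuous F)
    (hΘpos : ∀ t ∈ Icc (-T) T, 0 ≤ Θ t)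
    (hFpos : ∀ t ∈ Icc (-T) T, 0 ≤ F t)
    (hsub : ∀ t ∈ Icc (-T) T, σ ^ 2 * Θ t - F t ≤ deriv (deriv Θ) t) :
    (∫ t in (-T)..T, Θ t) ≤
      (2 / σ) * (Θ T + Θ (-T)) / (1 - Real.exp (-4 * σ * T))
        + (1 / σ ^ 2) * ∫ s in (-T)..T, F s := by
  have hΘ1 : ContDiff ℝ 1 (deriv Θ) := (contDiff_succ_iff_deriv.mp hΘ).2.2
  have hbound := integral_le_tanh_mul_add_integral_coshWeight_mul (F := F) hσ.ne' hT.le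
    (fun t _ => (hΘ.differentiable two_ne_zero t).hasDerivAt)
    (fun t _ => (hΘ1.differentiable one_ne_zero t).hasDerivAt)
    (hΘ1.continuous_deriv le_rfl).continuousOn hF.continuousOn hsub
  have htanh : tanh (σ * T) / σ ≤ 2 / σ / (1 - exp (-4 * σ * T)) := by
    rw [div_right_comm, mul_assoc]
    exact div_le_div_of_nonneg_right (tanh_le_two_div_one_sub_exp (mul_pos hσ hT)) hσ.le
  have hΘ_ends : 0 ≤ Θ T + Θ (-T) :=
    add_nonneg (hΘpos T ⟨by linarith, le_rfl⟩) (hΘpos (-T) ⟨le_rfl, by linarith⟩)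
  calc ∫ t in (-T)..T, Θ t
      ≤ tanh (σ * T) / σ * (Θ T + Θ (-T)) + ∫ t in (-T)..T, coshWeight σ T t * F t := hbound
    _ ≤ 2 / σ / (1 - exp (-4 * σ * T)) * (Θ T + Θ (-T)) + 1 / σ ^ 2 * ∫ s in (-T)..T, F s :=
        add_le_add (mul_le_mul_of_nonneg_right htanh hΘ_ends)
          (integral_coshWeight_mul_le hT.le (hF.intervalIntegrable _ _) hFpos)
    _ = _ := by ring
end
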